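/- Let (ψ_I)_I be a wavelet system where each ψ_I is L²-normalized adapted to the dyadic interval I with |ψ_I(x)| ≤ |I|^{-1/2}(1+|I|^{-1}|x−c(I)|)^{-N} and each φ_I satisfies |φ_I(x)| ≤ |I|^{-1}(1+|I|^{-1}|x−c(I)|)^{-N}, with N ≥ 2. Then for all x ≠ t in ℝ, ∫_ℝ (∑_{I dyadic} φ_I(t)² ψ_I(x)² χ_I(y)/|I|)^{1/2} dy ≤ C/|x − t|, where the sum runs over all dyadic intervals I. -/

import Mathlib

open Real MeasureTheory

structure DyadicI where
  j : ℤ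
  k : ℤ

namespace DyadicI

/-- The length `2^j` of a dyadic interval. -/
noncomputable def len (I : DyadicI) : ℝ := (2 : ℝ) ^ I.j

/-- The underlying set `[k·2^j, (k+1)·2^j)` of a dyadic interval. -/
def toSet (I : DyadicI) : Set ℝ :=
  Set.Ico ((I.k : ℝ) * (2 : ℝ) ^ I.j) (((I.k : ℝ) + 1) * (2 : ℝ) ^ I.j)

/-- The center of a dyadic interval. -/
noncomputable def center (I : DyadicI) : ℝ := ((I.k : ℝ) + 1/2) * (2 : ℝ) ^ I.j

/-- The diameter of the union of two dyadic intervals. -/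
noncomputable def diamUnion (I J : DyadicI) : ℝ :=
  max (((I.k : ℝ) + 1) * (2 : ℝ) ^ I.j) (((J.k : ℝ) + 1) * (2 : ℝ) ^ J.j)
    - min ((I.k : ℝ) * (2 : ℝ) ^ I.j) ((J.k : ℝ) * (2 : ℝ) ^ J.j)

end DyadicI
/-!
Both wavelet bounds are dominated by the quadratic decay factor
`w_I(s) = (1 + |s - c(I)| / |I|)⁻²`, so each summand is at most `(|I|⁻² w_I(t) w_I(x) χ_I(y))²`,
and since `ℓ¹ ⊆ ℓ²` the square function is at most `∑_I |I|⁻² w_I(t) w_I(x) χ_I(y)`. Integrating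
in `y` leaves `∑_I |I|⁻¹ w_I(t) w_I(x)`. At a fixed scale `2^j`, the inequality
`w(a) w(b) ≤ 4 w(a - b) (w(a) + w(b))` and the uniform bound on `∑_k w(u - k)` control the sum over
positions by `2⁻ʲ w(|x - t| / 2^j)`; these terms decay geometrically on both sides of the scale
`2^j ≈ |x - t|` and sum to `O(1 / |x - t|)`. All sums are taken in `ℝ≥0∞`, so no summability has
to be checked.
-/

open scoped ENNReal

theorem ENNReal.ofReal_sqrt_tsum_le {ι : Type*} {a b : ι → ℝ} (ha : ∀ i, 0 ≤ a i)
    (hb : ∀ i, 0 ≤ b i) (hab : ∀ i, a i ≤ b i ^ 2) :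
    ENNReal.ofReal √(∑' i, a i) ≤ ∑' i, ENNReal.ofReal (b i) := by
  by_cases hs : Summable a
  swap
  · simp [tsum_eq_zero_of_not_summable hs]
  rw [← ENNReal.pow_le_pow_left_iff two_ne_zero, ← ENNReal.ofReal_pow (Real.sqrt_nonneg _),
    Real.sq_sqrt (tsum_nonneg ha), ENNReal.ofReal_tsum_of_nonneg ha hs, sq,
    ← ENNReal.tsum_mul_right]
  refine ENNReal.tsum_le_tsum fun i => ?_
  calc ENNReal.ofReal (a i) ≤ ENNReal.ofReal (b i) * ENNReal.ofReal (b i) := by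
        rw [← ENNReal.ofReal_mul (hb i), ← sq]; exact ENNReal.ofReal_le_ofReal (hab i)
    _ ≤ ENNReal.ofReal (b i) * ∑' j, ENNReal.ofReal (b j) := by gcongr; exact ENNReal.le_tsum i

theorem MeasureTheory.integral_le_of_lintegral_ofReal_le {α : Type*} [MeasurableSpace α]
    {μ : Measure α} {f : α → ℝ} {C : ℝ} (hf : 0 ≤ᵐ[μ] f) (hC : 0 ≤ C)
    (h : ∫⁻ x, ENNReal.ofReal (f x) ∂μ ≤ ENNReal.ofReal C) : ∫ x, f x ∂μ ≤ C := by
  by_cases hi : Integrable f μ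
  · rwa [← ENNReal.ofReal_le_ofReal_iff hC, ofReal_integral_eq_lintegral_ofReal hi hf]
  · rwa [integral_undef hi]

noncomputable def quadDecay (u : ℝ) : ℝ := ((1 + |u|) ^ 2)⁻¹

lemma quadDecay_pos (u : ℝ) : 0 < quadDecay u := by unfold quadDecay; positivity

lemma quadDecay_abs (u : ℝ) : quadDecay |u| = quadDecay u := by simp [quadDecay]

lemma quadDecay_antitone {u v : ℝ} (h : |u| ≤ |v|) : quadDecay v ≤ quadDecay u := by
  unfold quadDecay; gcongr

lemma quadDecay_le_four_mul {u v : ℝ} (h : |u - v| ≤ 1) : quadDecay u ≤ 4 * quadDecay v := by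
  have : 1 + |v| ≤ 2 * (1 + |u|) := by
    have := abs_sub_abs_le_abs_sub v u; rw [abs_sub_comm] at this; linarith [abs_nonneg u]
  unfold quadDecay
  rw [← div_eq_mul_inv, le_div_iff₀ (by positivity), ← div_eq_inv_mul, div_le_iff₀ (by positivity)]
  nlinarith [abs_nonneg v]

lemma quadDecay_mul_quadDecay_le (u v : ℝ) :
    quadDecay u * quadDecay v ≤ 4 * quadDecay (u - v) * (quadDecay u + quadDecay v) := by
  have huv : |u - v| ≤ |u| + |v| := abs_sub _ _
  have key : (1 + |u - v|) ^ 2 ≤ 4 * ((1 + |u|) ^ 2 + (1 + |v|) ^ 2) := by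
    nlinarith [sq_nonneg (|u| - |v|), abs_nonneg u, abs_nonneg v, abs_nonneg (u - v)]
  unfold quadDecay
  rw [← sub_nonneg]
  have expand : 4 * ((1 + |u - v|) ^ 2)⁻¹ * (((1 + |u|) ^ 2)⁻¹ + ((1 + |v|) ^ 2)⁻¹)
      - ((1 + |u|) ^ 2)⁻¹ * ((1 + |v|) ^ 2)⁻¹
      = (4 * ((1 + |u|) ^ 2 + (1 + |v|) ^ 2) - (1 + |u - v|) ^ 2)
        * (((1 + |u - v|) ^ 2)⁻¹ * ((1 + |u|) ^ 2)⁻¹ * ((1 + |v|) ^ 2)⁻¹) := by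
    field_simp
    ring
  rw [expand]
  exact mul_nonneg (by linarith) (by positivity)

lemma mul_quadDecay_le_self {s : ℝ} (hs : 0 ≤ s) : s * quadDecay s ≤ s := by
  unfold quadDecay
  exact mul_le_of_le_one_right hs (inv_le_one_of_one_le₀ (by nlinarith [abs_nonneg s]))

lemma mul_quadDecay_le_inv {s : ℝ} (hs : 0 < s) : s * quadDecay s ≤ s⁻¹ := by
  unfold quadDecay
  rw [abs_of_pos hs, ← div_eq_mul_inv, div_le_iff₀ (by positivity), ← div_eq_inv_mul,
    le_div_iff₀ hs]
  nlinarith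

lemma hasSum_quadDecay_natCast : HasSum (fun n : ℕ => quadDecay n) (π ^ 2 / 6) := by
  have h := (hasSum_nat_add_iff' 1).mpr hasSum_zeta_two
  simp only [Finset.range_one, Finset.sum_singleton, Nat.cast_zero, zero_pow two_ne_zero,
    div_zero, sub_zero, Nat.cast_add, Nat.cast_one] at h
  refine h.congr_fun fun n => ?_
  rw [quadDecay, Nat.abs_cast, one_div, add_comm]

lemma tsum_quadDecay_intCast_le : ∑' i : ℤ, ENNReal.ofReal (quadDecay i) ≤ 6 := by
  have hnat : ∑' n : ℕ, ENNReal.ofReal (quadDecay n) = ENNReal.ofReal (π ^ 2 / 6) := by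
    rw [← ENNReal.ofReal_tsum_of_nonneg (fun n => (quadDecay_pos _).le)
      hasSum_quadDecay_natCast.summable, hasSum_quadDecay_natCast.tsum_eq]
  have hneg (n : ℕ) : quadDecay ((-(n + 1 : ℤ) : ℤ) : ℝ) ≤ quadDecay n :=
    quadDecay_antitone <| by
      push_cast
      rw [abs_neg, Nat.abs_cast, abs_of_nonneg (by positivity)]
      linarith
  rw [tsum_of_nat_of_neg_add_one ENNReal.summable ENNReal.summable]
  calc (∑' n : ℕ, ENNReal.ofReal (quadDecay ((n : ℤ) : ℝ)))
        + ∑' n : ℕ, ENNReal.ofReal (quadDecay ((-(n + 1 : ℤ) : ℤ) : ℝ))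
      ≤ ENNReal.ofReal (π ^ 2 / 6) + ENNReal.ofReal (π ^ 2 / 6) := by
        gcongr
        · simp [← hnat]
        · rw [← hnat]; exact ENNReal.tsum_le_tsum fun n => ENNReal.ofReal_le_ofReal (hneg n)
    _ ≤ ENNReal.ofReal 6 := by
        rw [← ENNReal.ofReal_add (by positivity) (by positivity)]
        exact ENNReal.ofReal_le_ofReal (by nlinarith [pi_le_four, pi_pos])
    _ = 6 := ENNReal.ofReal_ofNat 6

lemma tsum_quadDecay_sub_intCast_le (u : ℝ) :
    ∑' k : ℤ, ENNReal.ofReal (quadDecay (u - k)) ≤ 24 := by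
  rw [← (Equiv.subLeft ⌊u⌋).tsum_eq]
  calc ∑' i : ℤ, ENNReal.ofReal (quadDecay (u - (Equiv.subLeft ⌊u⌋ i : ℤ)))
      ≤ ∑' i : ℤ, 4 * ENNReal.ofReal (quadDecay i) := by
        refine ENNReal.tsum_le_tsum fun i => ?_
        rw [← ENNReal.ofReal_ofNat 4, ← ENNReal.ofReal_mul (by norm_num)]
        refine ENNReal.ofReal_le_ofReal (quadDecay_le_four_mul ?_)
        have := Int.floor_le u
        have := Int.lt_floor_add_one u
        rw [Equiv.subLeft_apply, Int.cast_sub, abs_le]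
        constructor <;> linarith
    _ ≤ 4 * 6 := by rw [ENNReal.tsum_mul_left]; gcongr; exact tsum_quadDecay_intCast_le
    _ = 24 := by norm_num

lemma tsum_quadDecay_mul_quadDecay_le (u v : ℝ) :
    ∑' k : ℤ, ENNReal.ofReal (quadDecay (u - k) * quadDecay (v - k))
      ≤ ENNReal.ofReal (192 * quadDecay (u - v)) := by
  calc ∑' k : ℤ, ENNReal.ofReal (quadDecay (u - k) * quadDecay (v - k))
      ≤ ∑' k : ℤ, ENNReal.ofReal (4 * quadDecay (u - v))
          * (ENNReal.ofReal (quadDecay (u - k)) + ENNReal.ofReal (quadDecay (v - k))) := by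
        refine ENNReal.tsum_le_tsum fun k => ?_
        rw [← ENNReal.ofReal_add (quadDecay_pos _).le (quadDecay_pos _).le,
          ← ENNReal.ofReal_mul (by linarith [quadDecay_pos (u - v)])]
        refine ENNReal.ofReal_le_ofReal ?_
        simpa using quadDecay_mul_quadDecay_le (u - k) (v - k)
    _ ≤ ENNReal.ofReal (4 * quadDecay (u - v)) * (24 + 24) := by
        rw [ENNReal.tsum_mul_left, ENNReal.tsum_add]
        gcongr <;> apply tsum_quadDecay_sub_intCast_le
    _ = ENNReal.ofReal (192 * quadDecay (u - v)) := by
        rw [show (24 + 24 : ℝ≥0∞) = ENNReal.ofReal 48 by norm_num,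
          ← ENNReal.ofReal_mul (by linarith [quadDecay_pos (u - v)])]
        ring_nf

lemma tsum_ofReal_geometric_two : ∑' m : ℕ, ENNReal.ofReal ((1 / 2) ^ m) = 2 := by
  rw [← ENNReal.ofReal_tsum_of_nonneg (fun m => by positivity) summable_geometric_two,
    tsum_geometric_two, ENNReal.ofReal_ofNat]

lemma tsum_div_zpow_mul_quadDecay_le {a : ℝ} (ha : 0 < a) :
    ∑' j : ℤ, ENNReal.ofReal (a / 2 ^ j * quadDecay (a / 2 ^ j)) ≤ 6 := by
  obtain ⟨n, hn⟩ := exists_mem_Ico_zpow ha one_lt_two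
  have hnat (m : ℕ) : a / 2 ^ ((m : ℤ) + n) ≤ 2 * (1 / 2) ^ m := by
    have h := hn.2
    rw [zpow_add_one₀ two_ne_zero] at h
    rw [zpow_add₀ two_ne_zero, zpow_natCast, div_le_iff₀ (by positivity),
      show 2 * (1 / 2 : ℝ) ^ m * (2 ^ m * 2 ^ n) = 2 ^ n * 2 by rw [one_div_pow]; field_simp]
    exact h.le
  have hneg (m : ℕ) : (2 : ℝ) ^ (m + 1) ≤ a / 2 ^ (-(m + 1 : ℤ) + n) := by
    rw [zpow_add₀ two_ne_zero, le_div_iff₀ (by positivity), zpow_neg, ← mul_assoc]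
    norm_cast
    rw [mul_inv_cancel₀ (by positivity), one_mul]
    exact hn.1
  rw [← (Equiv.addRight n).tsum_eq, tsum_of_nat_of_neg_add_one ENNReal.summable ENNReal.summable]
  simp only [Equiv.coe_addRight]
  calc _ ≤ ∑' m : ℕ, 2 * ENNReal.ofReal ((1 / 2) ^ m) + ∑' m : ℕ, ENNReal.ofReal ((1 / 2) ^ m) := by
        gcongr with m m
        · rw [← ENNReal.ofReal_ofNat 2, ← ENNReal.ofReal_mul (by norm_num)]
          exact ENNReal.ofReal_le_ofReal
            ((mul_quadDecay_le_self (by positivity)).trans (hnat m))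
        · refine (mul_quadDecay_le_inv (by positivity)).trans ?_
          calc _ ≤ ((2 : ℝ) ^ (m + 1))⁻¹ := inv_anti₀ (by positivity) (hneg m)
            _ ≤ (1 / 2) ^ m := by
              rw [← inv_pow, pow_succ, ← one_div]
              exact mul_le_of_le_one_right (by positivity) (by norm_num)
    _ = 6 := by rw [ENNReal.tsum_mul_left, tsum_ofReal_geometric_two]; norm_num

lemma one_add_abs_rpow_neg_le_quadDecay {p : ℝ} (hp : 2 ≤ p) (u : ℝ) :
    (1 + |u|) ^ (-p) ≤ quadDecay u := by
  have h1 : 1 ≤ 1 + |u| := by linarith [abs_nonneg u]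
  calc (1 + |u|) ^ (-p) ≤ (1 + |u|) ^ (-2 : ℝ) := Real.rpow_le_rpow_of_exponent_le h1 (by linarith)
    _ = quadDecay u := by rw [Real.rpow_neg (by linarith), Real.rpow_two, quadDecay]

namespace DyadicI

def equivIntProd : ℤ × ℤ ≃ DyadicI where
  toFun p := ⟨p.1, p.2⟩
  invFun I := (I.j, I.k)
  left_inv _ := rfl
  right_inv _ := rfl

instance : Countable DyadicI := equivIntProd.symm.injective.countable

lemma len_pos (I : DyadicI) : 0 < I.len := zpow_pos two_pos I.j

lemma inv_len_mul_sub_center (I : DyadicI) (s : ℝ) :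
    I.len⁻¹ * (s - I.center) = I.len⁻¹ * s - 1 / 2 - I.k := by
  have := (len_pos I).ne'
  rw [center, ← len]
  field_simp
  ring

lemma measurableSet_toSet (I : DyadicI) : MeasurableSet I.toSet := measurableSet_Ico

lemma volume_toSet (I : DyadicI) : volume I.toSet = ENNReal.ofReal I.len := by
  rw [toSet, Real.volume_Ico, len]
  ring_nf

noncomputable def weight (I : DyadicI) (s : ℝ) : ℝ := quadDecay (I.len⁻¹ * (s - I.center))

lemma weight_pos (I : DyadicI) (s : ℝ) : 0 < I.weight s := quadDecay_pos _

lemma one_add_rpow_neg_le_weight {p : ℝ} (hp : 2 ≤ p) (I : DyadicI) (s : ℝ) :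
    (1 + I.len⁻¹ * |s - I.center|) ^ (-p) ≤ I.weight s := by
  rw [← abs_of_pos (inv_pos.mpr I.len_pos), ← abs_mul]
  exact one_add_abs_rpow_neg_le_quadDecay hp _

noncomputable def kernelMajorant (I : DyadicI) (x t : ℝ) : ℝ :=
  I.len⁻¹ ^ 2 * (I.weight t * I.weight x)

lemma kernelMajorant_pos (I : DyadicI) (x t : ℝ) : 0 < I.kernelMajorant x t := by
  have := I.len_pos; have := I.weight_pos t; have := I.weight_pos x
  unfold kernelMajorant; positivity

lemma sq_mul_sq_mul_indicator_div_len_le (I : DyadicI) {a b x t : ℝ}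
    (ha : |a| ≤ I.len⁻¹ * I.weight t) (hb : |b| ≤ I.len ^ (-(1 / 2) : ℝ) * I.weight x) (y : ℝ) :
    a ^ 2 * b ^ 2 * I.toSet.indicator (fun _ => 1) y / I.len
      ≤ (I.toSet.indicator (fun _ => I.kernelMajorant x t) y) ^ 2 := by
  by_cases hy : y ∈ I.toSet
  swap
  · simp [hy]
  have hL := I.len_pos
  have ha2 : a ^ 2 ≤ (I.len⁻¹ * I.weight t) ^ 2 := by
    rw [← sq_abs]; exact pow_le_pow_left₀ (abs_nonneg a) ha 2
  have hb2 : b ^ 2 ≤ I.len⁻¹ * I.weight x ^ 2 := by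
    rw [← sq_abs]
    refine (pow_le_pow_left₀ (abs_nonneg b) hb 2).trans_eq ?_
    rw [mul_pow, ← Real.rpow_natCast, ← Real.rpow_mul hL.le]
    norm_num [Real.rpow_neg_one]
  simp only [Set.indicator_of_mem hy, mul_one, kernelMajorant]
  calc a ^ 2 * b ^ 2 / I.len ≤ (I.len⁻¹ * I.weight t) ^ 2 * (I.len⁻¹ * I.weight x ^ 2) / I.len := by
        gcongr
    _ = (I.len⁻¹ ^ 2 * (I.weight t * I.weight x)) ^ 2 := by ring

lemma lintegral_ofReal_indicator (I : DyadicI) {c : ℝ} (hc : 0 ≤ c) :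
    ∫⁻ y, ENNReal.ofReal (I.toSet.indicator (fun _ => c) y) = ENNReal.ofReal (c * I.len) := by
  rw [Set.comp_indicator_const c ENNReal.ofReal ENNReal.ofReal_zero,
    lintegral_indicator_const I.measurableSet_toSet, volume_toSet, ENNReal.ofReal_mul hc]

lemma tsum_kernelMajorant_mul_len_fixed_scale_le (x t : ℝ) (j : ℤ) :
    ∑' k : ℤ, ENNReal.ofReal (kernelMajorant ⟨j, k⟩ x t * (2 : ℝ) ^ j)
      ≤ ENNReal.ofReal ((2 ^ j)⁻¹ * (192 * quadDecay (|x - t| / 2 ^ j))) := by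
  have hterm (k : ℤ) : kernelMajorant ⟨j, k⟩ x t * (2 : ℝ) ^ j
      = (2 ^ j)⁻¹ *
          (quadDecay ((2 ^ j)⁻¹ * t - 1 / 2 - k) * quadDecay ((2 ^ j)⁻¹ * x - 1 / 2 - k)) := by
    have : (2 : ℝ) ^ j ≠ 0 := by positivity
    rw [kernelMajorant, weight, weight, inv_len_mul_sub_center, inv_len_mul_sub_center, len]
    field_simp
  have hdiff : quadDecay ((2 ^ j)⁻¹ * t - 1 / 2 - ((2 ^ j)⁻¹ * x - 1 / 2))
      = quadDecay (|x - t| / 2 ^ j) := by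
    rw [show (2 ^ j)⁻¹ * t - 1 / 2 - ((2 ^ j)⁻¹ * x - 1 / 2) = -((x - t) / 2 ^ j) by ring,
      ← quadDecay_abs, abs_neg, abs_div, abs_of_pos (show (0 : ℝ) < 2 ^ j by positivity)]
  simp_rw [hterm, ENNReal.ofReal_mul (inv_nonneg.mpr (zpow_pos two_pos j).le)]
  rw [ENNReal.tsum_mul_left, ← hdiff]
  gcongr
  exact tsum_quadDecay_mul_quadDecay_le _ _

lemma tsum_kernelMajorant_mul_len_le {x t : ℝ} (hxt : x ≠ t) :
    ∑' I : DyadicI, ENNReal.ofReal (I.kernelMajorant x t * I.len)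
      ≤ ENNReal.ofReal (1152 / |x - t|) := by
  have hd : 0 < |x - t| := abs_pos.mpr (sub_ne_zero.mpr hxt)
  rw [← equivIntProd.tsum_eq]
  refine (ENNReal.tsum_prod (f := fun j k =>
    ENNReal.ofReal (kernelMajorant ⟨j, k⟩ x t * (2 : ℝ) ^ j))).trans_le ?_
  calc ∑' (j : ℤ) (k : ℤ), ENNReal.ofReal (kernelMajorant ⟨j, k⟩ x t * (2 : ℝ) ^ j)
      ≤ ∑' j : ℤ, ENNReal.ofReal (192 / |x - t|)
          * ENNReal.ofReal (|x - t| / 2 ^ j * quadDecay (|x - t| / 2 ^ j)) := by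
        refine ENNReal.tsum_le_tsum fun j =>
          (tsum_kernelMajorant_mul_len_fixed_scale_le x t j).trans_eq ?_
        rw [← ENNReal.ofReal_mul (by positivity)]
        congr 1
        field_simp
    _ ≤ ENNReal.ofReal (192 / |x - t|) * 6 := by
        rw [ENNReal.tsum_mul_left]
        gcongr
        exact tsum_div_zpow_mul_quadDecay_le hd
    _ = ENNReal.ofReal (1152 / |x - t|) := by
        rw [← ENNReal.ofReal_ofNat 6, ← ENNReal.ofReal_mul (by positivity)]
        ring_nf

end DyadicI

/-- one-variable kernel size estimate for paraproduct kernels: the `L¹` norm in `y`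
of the square function `(∑_I φ_I(t)²ψ_I(x)²χ_I(y)/|I|)^{1/2}` is bounded by `C/|x−t|`. -/
theorem statement8 (N : ℕ) (hN : 2 ≤ N) :
    ∃ C : ℝ, 0 < C ∧
    ∀ ψ φ : DyadicI → ℝ → ℝ,
      (∀ (I : DyadicI) (x : ℝ),
        |ψ I x| ≤ I.len ^ (-(1/2 : ℝ)) * (1 + I.len⁻¹ * |x - I.center|) ^ (-(N : ℝ))) →
      (∀ (I : DyadicI) (x : ℝ),
        |φ I x| ≤ I.len⁻¹ * (1 + I.len⁻¹ * |x - I.center|) ^ (-(N : ℝ))) →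
      ∀ x t : ℝ, x ≠ t →
        (∫ y, Real.sqrt (∑' I : DyadicI,
            (φ I t) ^ 2 * (ψ I x) ^ 2 * Set.indicator I.toSet (fun _ => (1 : ℝ)) y / I.len)) ≤
          C / |x - t| := by
  refine ⟨1152, by norm_num, fun ψ φ hψ hφ x t hxt => ?_⟩
  have hp : (2 : ℝ) ≤ N := by exact_mod_cast hN
  have hψ' (I : DyadicI) : |ψ I x| ≤ I.len ^ (-(1 / 2) : ℝ) * I.weight x :=
    (hψ I x).trans (mul_le_mul_of_nonneg_left (I.one_add_rpow_neg_le_weight hp x)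
      (Real.rpow_nonneg I.len_pos.le _))
  have hφ' (I : DyadicI) : |φ I t| ≤ I.len⁻¹ * I.weight t :=
    (hφ I t).trans (mul_le_mul_of_nonneg_left (I.one_add_rpow_neg_le_weight hp t)
      (inv_nonneg.mpr I.len_pos.le))
  refine integral_le_of_lintegral_ofReal_le (ae_of_all _ fun y => Real.sqrt_nonneg _)
    (div_nonneg (by norm_num) (abs_nonneg _)) ?_
  calc ∫⁻ y, ENNReal.ofReal √(∑' I : DyadicI,
          (φ I t) ^ 2 * (ψ I x) ^ 2 * Set.indicator I.toSet (fun _ => (1 : ℝ)) y / I.len)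
      ≤ ∫⁻ y, ∑' I : DyadicI,
          ENNReal.ofReal (I.toSet.indicator (fun _ => I.kernelMajorant x t) y) :=
        lintegral_mono fun y => ENNReal.ofReal_sqrt_tsum_le
          (fun I => div_nonneg (mul_nonneg (by positivity) (Set.indicator_nonneg (by simp) y))
            I.len_pos.le)
          (fun I => Set.indicator_nonneg (fun _ _ => (I.kernelMajorant_pos x t).le) y)
          (fun I => I.sq_mul_sq_mul_indicator_div_len_le (hφ' I) (hψ' I) y)
    _ = ∑' I : DyadicI, ENNReal.ofReal (I.kernelMajorant x t * I.len) := by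
        rw [lintegral_tsum fun I =>
          (measurable_const.indicator I.measurableSet_toSet).ennreal_ofReal.aemeasurable]
        exact tsum_congr fun I => I.lintegral_ofReal_indicator (I.kernelMajorant_pos x t).le
    _ ≤ ENNReal.ofReal (1152 / |x - t|) := DyadicI.tsum_kernelMajorant_mul_len_le hxt
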